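/- Let θ be a probability measure on ℝⁿ with finite second moment, let X be a random vector with distribution θ, and let G and G̃ be symmetric positive definite matrices of size (n+m_L+m_R), with blocks indexed by X (first n coordinates), L (next m_L coordinates), R (last m_R coordinates). Define P := G^{XX} − [G^{XL}, G^{XR}] ([[G^{LL}, G^{LR}], [G^{RL}, G^{RR}]])⁻¹ [G^{LX}; G^{RX}] and P̃ := G̃^{XX} − G̃^{XL} (G̃^{LL})⁻¹ G̃^{LX}. Then the infimum, over all ū ∈ ℝ^{m_L}, u ∈ ℝ^{m_R}, and measurable q : ℝⁿ → ℝ^{m_L} with ∫ ‖q(x)‖² θ(dx) < ∞ and ∫ q(x) θ(dx) = 0, of (E[S])ᵀ G (E[S]) + tr(G̃ · Cov(S)) with S := [X; ū + q(X); u], equals μ(θ)ᵀ P μ(θ) + tr(P̃ · Cov(θ)); moreover, this infimum is attained at [ū*; u*] = −([[G^{LL}, G^{LR}], [G^{RL}, G^{RR}]])⁻¹ [G^{LX}; G^{RX}] μ(θ) and q*(x) = −(G̃^{LL})⁻¹ G̃^{LX} (x − μ(θ)). -/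

import Mathlib

open Matrix MeasureTheory

/-- Coordinatewise mean of a random vector. -/
noncomputable def vecMean {Ω : Type*} [MeasurableSpace Ω] (μ : Measure Ω)
    {k : Type*} (S : Ω → k → ℝ) : k → ℝ :=
  fun i => ∫ ω, S ω i ∂μ

/-- Covariance matrix of a random vector:
`Cov(S) = E[(S − E[S])(S − E[S])ᵀ]`. -/
noncomputable def vecCov {Ω : Type*} [MeasurableSpace Ω] (μ : Measure Ω)
    {k : Type*} (S : Ω → k → ℝ) : Matrix k k ℝ :=
  Matrix.of fun i j => ∫ ω, (S ω i - vecMean μ S i) * (S ω j - vecMean μ S j) ∂μ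

/-- Mean `μ(θ)` of a probability measure `θ` on `ℝⁿ`. -/
noncomputable def measMean {n : ℕ} (θ : Measure (Fin n → ℝ)) : Fin n → ℝ :=
  vecMean θ id

/-- Covariance `Cov(θ)` of a probability measure `θ` on `ℝⁿ`. -/
noncomputable def measCov {n : ℕ} (θ : Measure (Fin n → ℝ)) :
    Matrix (Fin n) (Fin n) ℝ :=
  vecCov θ id

/-- A feasible deviation function: measurable, θ-square-integrable, with
zero mean under `θ`. -/
def Feasible (n mL : ℕ) (θ : Measure (Fin n → ℝ))
    (q : (Fin n → ℝ) → Fin mL → ℝ) : Prop :=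
  Measurable q ∧ Integrable (fun x => ‖q x‖ ^ 2) θ ∧ (∫ x, q x ∂θ) = 0

/-!
Because `q` has mean zero, `E[S] = [μ; ū; u]` and `S - E[S] = [X - μ; q(X); 0]`, so the objective
is `[μ; ū; u]ᵀ G [μ; ū; u] + E[[X - μ; q(X)]ᵀ G̃' [X - μ; q(X)]]`, where `G̃'` is the `(X, L)` block
of `G̃`. For a positive definite `H = [[A, B], [C, D]]`, completing the square gives
`[x; y]ᵀ H [x; y] = xᵀ (A - B D⁻¹ C) x + (y + D⁻¹ C x)ᵀ D (y + D⁻¹ C x)`, so both terms are bounded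
below by their Schur complement forms, pointwise in `x`, with equality at `y = -D⁻¹ C x`: this
gives `ū*, u*` and `q*`. Finally `E[(X - μ)ᵀ P̃ (X - μ)] = tr(P̃ Cov θ)`.
-/

theorem Measurable.sumElim_pi {α a b : Type*} [MeasurableSpace α] {f : α → a → ℝ}
    {g : α → b → ℝ} (hf : Measurable f) (hg : Measurable g) :
    Measurable fun x => Sum.elim (f x) (g x) :=
  measurable_pi_iff.2 fun
    | .inl i => (measurable_pi_apply i).comp hf
    | .inr i => (measurable_pi_apply i).comp hg

theorem MeasureTheory.MemLp.sumElim {α : Type*} [MeasurableSpace α] {μ : Measure α}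
    {p : ENNReal} {a b : Type*} [Fintype a] [Fintype b] {f : α → a → ℝ} {g : α → b → ℝ}
    (hf : MemLp f p μ) (hg : MemLp g p μ) : MemLp (fun x => Sum.elim (f x) (g x)) p μ :=
  memLp_pi_iff.2 fun
    | .inl i => hf.eval i
    | .inr i => hg.eval i

namespace Matrix

variable {a b : Type*} [Fintype a] [Fintype b] [DecidableEq b]

noncomputable def schurCompl₂₂ (H : Matrix (a ⊕ b) (a ⊕ b) ℝ) : Matrix a a ℝ :=
  H.submatrix Sum.inl Sum.inl -
    H.submatrix Sum.inl Sum.inr * (H.submatrix Sum.inr Sum.inr)⁻¹ * H.submatrix Sum.inr Sum.inl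

variable {H : Matrix (a ⊕ b) (a ⊕ b) ℝ}

theorem PosDef.sumElim_dotProduct_mulVec (hH : H.PosDef) (x : a → ℝ) (y : b → ℝ) :
    Sum.elim x y ⬝ᵥ H *ᵥ Sum.elim x y =
      x ⬝ᵥ H.schurCompl₂₂ *ᵥ x +
        (y + (H.submatrix Sum.inr Sum.inr)⁻¹ *ᵥ (H.submatrix Sum.inr Sum.inl *ᵥ x)) ⬝ᵥ
          H.submatrix Sum.inr Sum.inr *ᵥ
            (y + (H.submatrix Sum.inr Sum.inr)⁻¹ *ᵥ (H.submatrix Sum.inr Sum.inl *ᵥ x)) := by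
  have hD := hH.submatrix (Sum.inr_injective : Function.Injective (Sum.inr : b → a ⊕ b))
  let _ := hD.isUnit.invertible
  have key := schur_complement_eq₂₂ (H.submatrix Sum.inl Sum.inl) (H.submatrix Sum.inl Sum.inr)
    x y hD.1
  have hblocks : fromBlocks (H.submatrix Sum.inl Sum.inl) (H.submatrix Sum.inl Sum.inr)
      (H.submatrix Sum.inr Sum.inl) (H.submatrix Sum.inr Sum.inr) = H :=
    fromBlocks_toBlocks H
  rw [conjTranspose_submatrix, hH.1.eq, hblocks] at key
  simp only [star_trivial, ← dotProduct_mulVec, ← mulVec_mulVec] at key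
  rw [key, schurCompl₂₂, add_comm (_ *ᵥ _) y, add_comm]

theorem PosDef.dotProduct_schurCompl₂₂_mulVec_le (hH : H.PosDef) (x : a → ℝ) (y : b → ℝ) :
    x ⬝ᵥ H.schurCompl₂₂ *ᵥ x ≤ Sum.elim x y ⬝ᵥ H *ᵥ Sum.elim x y := by
  rw [hH.sumElim_dotProduct_mulVec]
  have hD := hH.submatrix (Sum.inr_injective : Function.Injective (Sum.inr : b → a ⊕ b))
  exact le_add_of_nonneg_right (hD.posSemidef.dotProduct_mulVec_nonneg _)

theorem PosDef.sumElim_neg_dotProduct_mulVec (hH : H.PosDef) (x : a → ℝ) :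
    Sum.elim x (-((H.submatrix Sum.inr Sum.inr)⁻¹ *ᵥ (H.submatrix Sum.inr Sum.inl *ᵥ x))) ⬝ᵥ
        H *ᵥ Sum.elim x (-((H.submatrix Sum.inr Sum.inr)⁻¹ *ᵥ (H.submatrix Sum.inr Sum.inl *ᵥ x))) =
      x ⬝ᵥ H.schurCompl₂₂ *ᵥ x := by
  rw [hH.sumElim_dotProduct_mulVec, neg_add_cancel, mulVec_zero, dotProduct_zero, add_zero]

end Matrix

theorem Matrix.sumElim_sumElim_zero_dotProduct_mulVec {a b c : Type*} [Fintype a] [Fintype b]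
    [Fintype c] (M : Matrix (a ⊕ (b ⊕ c)) (a ⊕ (b ⊕ c)) ℝ) (v : a → ℝ) (w : b → ℝ) :
    Sum.elim v (Sum.elim w 0) ⬝ᵥ M *ᵥ Sum.elim v (Sum.elim w 0) =
      Sum.elim v w ⬝ᵥ M.submatrix (Sum.map id Sum.inl) (Sum.map id Sum.inl) *ᵥ Sum.elim v w := by
  simp [mulVec, dotProduct, Fintype.sum_sum_type]

section Moments

variable {α : Type*} [MeasurableSpace α] {μ : Measure α} {k : Type*}

theorem vecMean_comp {β : Type*} [MeasurableSpace β] {X : α → β} (hX : Measurable X)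
    {f : β → k → ℝ} (hf : Measurable f) :
    vecMean μ (fun ω => f (X ω)) = vecMean (μ.map X) f := by
  funext i
  exact (integral_map hX.aemeasurable ((measurable_pi_apply i).comp hf).aestronglyMeasurable).symm

theorem vecCov_comp {β : Type*} [MeasurableSpace β] {X : α → β} (hX : Measurable X)
    {f : β → k → ℝ} (hf : Measurable f) :
    vecCov μ (fun ω => f (X ω)) = vecCov (μ.map X) f := by
  ext i j
  simp only [vecCov, of_apply, vecMean_comp hX hf]
  have hfi (i : k) : Measurable fun y => f y i := (measurable_pi_apply i).comp hf
  exact (integral_map hX.aemeasurable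
    (((hfi i).sub_const _).mul ((hfi j).sub_const _)).aestronglyMeasurable).symm

variable [Fintype k]

theorem dotProduct_mulVec_self_eq_sum (M : Matrix k k ℝ) (z : k → ℝ) :
    z ⬝ᵥ M *ᵥ z = ∑ i, ∑ j, M i j * (z i * z j) := by
  simp only [dotProduct, mulVec, Finset.mul_sum]
  exact Finset.sum_congr rfl fun i _ => Finset.sum_congr rfl fun j _ => by ring

theorem MeasureTheory.MemLp.integrable_apply_mul_apply {Z : α → k → ℝ} (hZ : MemLp Z 2 μ)
    (i j : k) :
    Integrable (fun ω => Z ω i * Z ω j) μ :=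
  (hZ.eval i).integrable_mul (hZ.eval j)

theorem MeasureTheory.MemLp.integrable_dotProduct_mulVec {Z : α → k → ℝ} (hZ : MemLp Z 2 μ)
    (M : Matrix k k ℝ) : Integrable (fun ω => Z ω ⬝ᵥ M *ᵥ Z ω) μ := by
  simp only [dotProduct_mulVec_self_eq_sum]
  exact integrable_finsetSum _ fun i _ => integrable_finsetSum _ fun j _ =>
    (hZ.integrable_apply_mul_apply i j).const_mul _

theorem MeasureTheory.MemLp.trace_mul_eq_integral {Z : α → k → ℝ} (hZ : MemLp Z 2 μ)
    (M : Matrix k k ℝ) :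
    (M * of fun i j => ∫ ω, Z ω i * Z ω j ∂μ).trace = ∫ ω, Z ω ⬝ᵥ M *ᵥ Z ω ∂μ := by
  have hint (i j : k) : Integrable (fun ω => M i j * (Z ω i * Z ω j)) μ :=
    (hZ.integrable_apply_mul_apply i j).const_mul _
  simp only [dotProduct_mulVec_self_eq_sum]
  rw [integral_finsetSum _ fun i _ => integrable_finsetSum _ fun j _ => hint i j]
  refine Finset.sum_congr rfl fun i _ => ?_
  rw [integral_finsetSum _ fun j _ => hint i j, diag_apply, mul_apply]
  refine Finset.sum_congr rfl fun j _ => ?_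
  rw [integral_const_mul, of_apply]
  simp_rw [mul_comm (Z _ j)]

theorem trace_mul_vecCov [IsFiniteMeasure μ] {S : α → k → ℝ} (hS : MemLp S 2 μ)
    (M : Matrix k k ℝ) :
    (M * vecCov μ S).trace = ∫ ω, (S ω - vecMean μ S) ⬝ᵥ M *ᵥ (S ω - vecMean μ S) ∂μ :=
  (hS.sub (memLp_const (vecMean μ S))).trace_mul_eq_integral M

end Moments

section Stacked

variable {a b c : Type*} [Fintype b] {θ : Measure (a → ℝ)} [IsProbabilityMeasure θ]
  {q : (a → ℝ) → b → ℝ}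

theorem vecMean_sumElim_add (hq : Integrable q θ) (hq0 : ∫ x, q x ∂θ = 0) (ub : b → ℝ)
    (u : c → ℝ) :
    vecMean θ (fun x => Sum.elim x (Sum.elim (ub + q x) u)) =
      Sum.elim (vecMean θ id) (Sum.elim ub u) := by
  funext i
  rcases i with i | i | i
  · rfl
  · have hqi : ∫ x, q x i ∂θ = 0 := by rw [← eval_integral hq.eval, hq0, Pi.zero_apply]
    simp [vecMean, integral_add (integrable_const _) (hq.eval i), hqi]
  · simp [vecMean]

theorem trace_mul_vecCov_sumElim_add [Fintype a] [Fintype c] (hθ : MemLp id 2 θ)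
    (hq : MemLp q 2 θ) (hq0 : ∫ x, q x ∂θ = 0) (M : Matrix (a ⊕ (b ⊕ c)) (a ⊕ (b ⊕ c)) ℝ)
    (ub : b → ℝ) (u : c → ℝ) :
    (M * vecCov θ (fun x => Sum.elim x (Sum.elim (ub + q x) u))).trace =
      ∫ x, Sum.elim (x - vecMean θ id) (q x) ⬝ᵥ
        M.submatrix (Sum.map id Sum.inl) (Sum.map id Sum.inl) *ᵥ
          Sum.elim (x - vecMean θ id) (q x) ∂θ := by
  have hS : MemLp (fun x => Sum.elim x (Sum.elim (ub + q x) u)) 2 θ :=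
    hθ.sumElim (((memLp_const ub).add hq).sumElim (memLp_const u))
  rw [trace_mul_vecCov hS, vecMean_sumElim_add (hq.integrable one_le_two) hq0]
  refine integral_congr_ae (Filter.Eventually.of_forall fun x => ?_)
  have hcentered : Sum.elim x (Sum.elim (ub + q x) u) - Sum.elim (vecMean θ id) (Sum.elim ub u) =
      Sum.elim (x - vecMean θ id) (Sum.elim (q x) 0) := by
    funext i
    rcases i with i | i | i <;> simp
  dsimp only
  rw [hcentered, sumElim_sumElim_zero_dotProduct_mulVec]

theorem dotProduct_mulVec_vecMean_add_trace_mul_vecCov_sumElim_add [Fintype a] [Fintype c]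
    {Ω : Type*} [MeasurableSpace Ω] {P : Measure Ω} {X : Ω → a → ℝ} (hX : Measurable X)
    (hXlaw : P.map X = θ) (hθ : MemLp id 2 θ) (hqm : Measurable q) (hq : MemLp q 2 θ)
    (hq0 : ∫ x, q x ∂θ = 0) (G M : Matrix (a ⊕ (b ⊕ c)) (a ⊕ (b ⊕ c)) ℝ) (ub : b → ℝ)
    (u : c → ℝ) :
    let S := fun ω => Sum.elim (X ω) (Sum.elim (ub + q (X ω)) u)
    vecMean P S ⬝ᵥ G *ᵥ vecMean P S + (M * vecCov P S).trace =
      Sum.elim (vecMean θ id) (Sum.elim ub u) ⬝ᵥ G *ᵥ Sum.elim (vecMean θ id) (Sum.elim ub u) +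
        ∫ x, Sum.elim (x - vecMean θ id) (q x) ⬝ᵥ
          M.submatrix (Sum.map id Sum.inl) (Sum.map id Sum.inl) *ᵥ
            Sum.elim (x - vecMean θ id) (q x) ∂θ := by
  have hs : Measurable fun x => Sum.elim x (Sum.elim (ub + q x) u) :=
    measurable_id.sumElim_pi ((measurable_const.add hqm).sumElim_pi measurable_const)
  intro S
  simp only [S]
  rw [vecMean_comp hX hs, vecCov_comp hX hs, hXlaw,
    vecMean_sumElim_add (hq.integrable one_le_two) hq0,
    trace_mul_vecCov_sumElim_add hθ hq hq0]

end Stacked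

theorem Feasible.memLp {n mL : ℕ} {θ : Measure (Fin n → ℝ)} {q : (Fin n → ℝ) → Fin mL → ℝ}
    (hq : Feasible n mL θ q) : MemLp q 2 θ :=
  (memLp_two_iff_integrable_sq_norm hq.1.aestronglyMeasurable).2 hq.2.1

theorem feasible_mulVec_sub_measMean {n mL : ℕ} {θ : Measure (Fin n → ℝ)}
    [IsProbabilityMeasure θ] (hθ : MemLp id 2 θ) (K : Matrix (Fin mL) (Fin n) ℝ) :
    Feasible n mL θ (fun x => K *ᵥ (x - measMean θ)) := by
  let L := (mulVecLin K).toContinuousLinearMap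
  have hcentered : MemLp (fun x => x - measMean θ) 2 θ := hθ.sub (memLp_const _)
  have hmean : ∫ x, x ∂θ = measMean θ :=
    funext (eval_integral (hθ.integrable one_le_two).eval)
  refine ⟨L.continuous.measurable.comp (measurable_id.sub_const _),
    (memLp_two_iff_integrable_sq_norm ?_).1 (hcentered.continuousLinearMap_comp L), ?_⟩
  · exact (L.continuous.measurable.comp (measurable_id.sub_const _)).aestronglyMeasurable
  · calc ∫ x, K *ᵥ (x - measMean θ) ∂θ = L (∫ x, x - measMean θ ∂θ) :=
          L.integral_comp_comm (hcentered.integrable one_le_two)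
      _ = 0 := by
          rw [integral_sub (f := fun x => x) (hθ.integrable one_le_two) (integrable_const _),
            hmean, integral_const, probReal_univ, one_smul, sub_self, map_zero]

theorem stmt13_general (n mL mR : ℕ)
    (θ : Measure (Fin n → ℝ)) [IsProbabilityMeasure θ]
    (hθ2 : Integrable (fun x => ‖x‖ ^ 2) θ)
    {Ω : Type*} [MeasurableSpace Ω] (P : Measure Ω)
    (X : Ω → Fin n → ℝ) (hX : Measurable X) (hXlaw : Measure.map X P = θ)
    (G Gt : Matrix (Fin n ⊕ (Fin mL ⊕ Fin mR)) (Fin n ⊕ (Fin mL ⊕ Fin mR)) ℝ)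
    (hG : G.PosDef) (hGt : Gt.PosDef) :
    let Sfun : (Fin mL → ℝ) → (Fin mR → ℝ) → ((Fin n → ℝ) → Fin mL → ℝ) →
        Ω → (Fin n ⊕ (Fin mL ⊕ Fin mR)) → ℝ :=
      fun ub u q ω => Sum.elim (X ω) (Sum.elim (ub + q (X ω)) u)
    let val : (Fin mL → ℝ) → (Fin mR → ℝ) → ((Fin n → ℝ) → Fin mL → ℝ) → ℝ :=
      fun ub u q =>
        vecMean P (Sfun ub u q) ⬝ᵥ G.mulVec (vecMean P (Sfun ub u q)) +
          (Gt * vecCov P (Sfun ub u q)).trace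
    let Pm := G.submatrix Sum.inl Sum.inl -
      G.submatrix Sum.inl Sum.inr * (G.submatrix Sum.inr Sum.inr)⁻¹ *
        G.submatrix Sum.inr Sum.inl
    let Ptm := Gt.submatrix Sum.inl Sum.inl -
      Gt.submatrix Sum.inl (fun j : Fin mL => Sum.inr (Sum.inl j)) *
        (Gt.submatrix (fun i : Fin mL => Sum.inr (Sum.inl i))
          (fun j : Fin mL => Sum.inr (Sum.inl j)))⁻¹ *
        Gt.submatrix (fun i : Fin mL => Sum.inr (Sum.inl i)) Sum.inl
    let target : ℝ :=
      measMean θ ⬝ᵥ Pm.mulVec (measMean θ) + (Ptm * measCov θ).trace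
    -- the optimal stacked vector [ū*; u*]
    let uu : Fin mL ⊕ Fin mR → ℝ :=
      -((G.submatrix Sum.inr Sum.inr)⁻¹.mulVec
        ((G.submatrix Sum.inr Sum.inl).mulVec (measMean θ)))
    let ubstar : Fin mL → ℝ := fun i => uu (Sum.inl i)
    let ustar : Fin mR → ℝ := fun i => uu (Sum.inr i)
    let qstar : (Fin n → ℝ) → Fin mL → ℝ := fun x =>
      -((Gt.submatrix (fun i : Fin mL => Sum.inr (Sum.inl i))
            (fun j : Fin mL => Sum.inr (Sum.inl j)))⁻¹.mulVec
        ((Gt.submatrix (fun i : Fin mL => Sum.inr (Sum.inl i)) Sum.inl).mulVec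
          (x - measMean θ)))
    -- `target` is a lower bound over all feasible choices
    (∀ (ub : Fin mL → ℝ) (u : Fin mR → ℝ) (q : (Fin n → ℝ) → Fin mL → ℝ),
        Feasible n mL θ q → target ≤ val ub u q) ∧
    -- and it is attained at the stated optimizer
    Feasible n mL θ qstar ∧ val ubstar ustar qstar = target := by
  intro Sfun val Pm Ptm target uu ubstar ustar qstar
  set m := measMean θ
  let Gt' := Gt.submatrix (Sum.map id Sum.inl) (Sum.map id (Sum.inl : Fin mL → Fin mL ⊕ Fin mR))
  have hGt' : Gt'.PosDef :=
    hGt.submatrix (Sum.map_injective.2 ⟨Function.injective_id, Sum.inl_injective⟩)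
  have hθ : MemLp id 2 θ := (memLp_two_iff_integrable_sq_norm aestronglyMeasurable_id).2 hθ2
  have hval (ub u q) (hq : Feasible n mL θ q) : val ub u q =
      Sum.elim m (Sum.elim ub u) ⬝ᵥ G *ᵥ Sum.elim m (Sum.elim ub u) +
        ∫ x, Sum.elim (x - m) (q x) ⬝ᵥ Gt' *ᵥ Sum.elim (x - m) (q x) ∂θ :=
    dotProduct_mulVec_vecMean_add_trace_mul_vecCov_sumElim_add hX hXlaw hθ hq.1 hq.memLp hq.2.2
      G Gt ub u
  have htarget : target = m ⬝ᵥ G.schurCompl₂₂ *ᵥ m +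
      ∫ x, (x - m) ⬝ᵥ Gt'.schurCompl₂₂ *ᵥ (x - m) ∂θ :=
    congrArg (_ + ·) (trace_mul_vecCov hθ _)
  have hfeas : Feasible n mL θ qstar := by
    convert feasible_mulVec_sub_measMean hθ
      (-((Gt'.submatrix Sum.inr Sum.inr)⁻¹ * Gt'.submatrix Sum.inr Sum.inl)) using 2
    rw [neg_mulVec, ← mulVec_mulVec]
    rfl
  refine ⟨fun ub u q hq => ?_, hfeas, ?_⟩
  · rw [hval ub u q hq, htarget]
    refine add_le_add (hG.dotProduct_schurCompl₂₂_mulVec_le m _) (integral_mono ?_ ?_ fun x =>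
      hGt'.dotProduct_schurCompl₂₂_mulVec_le (x - m) (q x))
    · exact (hθ.sub (memLp_const m)).integrable_dotProduct_mulVec _
    · exact ((hθ.sub (memLp_const m)).sumElim hq.memLp).integrable_dotProduct_mulVec _
  · rw [hval _ _ _ hfeas, htarget, show Sum.elim ubstar ustar = uu from Sum.elim_comp_inl_inr uu]
    exact congrArg₂ (· + ·) (hG.sumElim_neg_dotProduct_mulVec m)
      (integral_congr_ae (.of_forall fun x => hGt'.sumElim_neg_dotProduct_mulVec (x - m)))

/-- For symmetric positive definite `G`, `G̃` of size
`n + mL + mR`, with `P` the Schur complement of the lower-right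
`(mL+mR)`-block of `G` and `P̃` the Schur complement of the `L`-block in the
top-left `(n+mL)`-submatrix of `G̃`, the infimum over `(ū, u, q)` (with `q`
feasible) of `E[S]ᵀ G E[S] + tr(G̃ Cov(S))`, where `S = [X; ū + q(X); u]`,
equals `μ(θ)ᵀ P μ(θ) + tr(P̃ Cov(θ))`, attained at
`[ū*; u*] = −([[Gᴸᴸ,Gᴸᴿ],[Gᴿᴸ,Gᴿᴿ]])⁻¹ [Gᴸˣ; Gᴿˣ] μ(θ)` and
`q*(x) = −(G̃ᴸᴸ)⁻¹ G̃ᴸˣ (x − μ(θ))`. -/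
theorem stmt13 (n mL mR : ℕ)
    (θ : Measure (Fin n → ℝ)) [IsProbabilityMeasure θ]
    (hθ2 : Integrable (fun x => ‖x‖ ^ 2) θ)
    {Ω : Type*} [MeasurableSpace Ω] (P : Measure Ω) [IsProbabilityMeasure P]
    (X : Ω → Fin n → ℝ) (hX : Measurable X) (hXlaw : Measure.map X P = θ)
    (G Gt : Matrix (Fin n ⊕ (Fin mL ⊕ Fin mR)) (Fin n ⊕ (Fin mL ⊕ Fin mR)) ℝ)
    (hG : G.PosDef) (hGt : Gt.PosDef) :
    let Sfun : (Fin mL → ℝ) → (Fin mR → ℝ) → ((Fin n → ℝ) → Fin mL → ℝ) →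
        Ω → (Fin n ⊕ (Fin mL ⊕ Fin mR)) → ℝ :=
      fun ub u q ω => Sum.elim (X ω) (Sum.elim (ub + q (X ω)) u)
    let val : (Fin mL → ℝ) → (Fin mR → ℝ) → ((Fin n → ℝ) → Fin mL → ℝ) → ℝ :=
      fun ub u q =>
        vecMean P (Sfun ub u q) ⬝ᵥ G.mulVec (vecMean P (Sfun ub u q)) +
          (Gt * vecCov P (Sfun ub u q)).trace
    let Pm := G.submatrix Sum.inl Sum.inl -
      G.submatrix Sum.inl Sum.inr * (G.submatrix Sum.inr Sum.inr)⁻¹ *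
        G.submatrix Sum.inr Sum.inl
    let Ptm := Gt.submatrix Sum.inl Sum.inl -
      Gt.submatrix Sum.inl (fun j : Fin mL => Sum.inr (Sum.inl j)) *
        (Gt.submatrix (fun i : Fin mL => Sum.inr (Sum.inl i))
          (fun j : Fin mL => Sum.inr (Sum.inl j)))⁻¹ *
        Gt.submatrix (fun i : Fin mL => Sum.inr (Sum.inl i)) Sum.inl
    let target : ℝ :=
      measMean θ ⬝ᵥ Pm.mulVec (measMean θ) + (Ptm * measCov θ).trace
    -- the optimal stacked vector [ū*; u*]
    let uu : Fin mL ⊕ Fin mR → ℝ :=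
      -((G.submatrix Sum.inr Sum.inr)⁻¹.mulVec
        ((G.submatrix Sum.inr Sum.inl).mulVec (measMean θ)))
    let ubstar : Fin mL → ℝ := fun i => uu (Sum.inl i)
    let ustar : Fin mR → ℝ := fun i => uu (Sum.inr i)
    let qstar : (Fin n → ℝ) → Fin mL → ℝ := fun x =>
      -((Gt.submatrix (fun i : Fin mL => Sum.inr (Sum.inl i))
            (fun j : Fin mL => Sum.inr (Sum.inl j)))⁻¹.mulVec
        ((Gt.submatrix (fun i : Fin mL => Sum.inr (Sum.inl i)) Sum.inl).mulVec
          (x - measMean θ)))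
    -- `target` is a lower bound over all feasible choices
    (∀ (ub : Fin mL → ℝ) (u : Fin mR → ℝ) (q : (Fin n → ℝ) → Fin mL → ℝ),
        Feasible n mL θ q → target ≤ val ub u q) ∧
    -- and it is attained at the stated optimizer
    Feasible n mL θ qstar ∧ val ubstar ustar qstar = target :=
  stmt13_general n mL mR θ hθ2 P X hX hXlaw G Gt hG hGt
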